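/- arXiv:2508.18792 — 2 statements merged into one kernel-verified Lean document; each statement's English description precedes it below -/
import Mathlib

section
/- For every n ≥ 1 and every θ ∈ [0,π/2], G'_n(θ) = 4^{1−n}·G_n(2θ). (Enumeration of blobs with one red leaf, Proposition 3.7 of the paper, in coefficient form: B^{red}(z;θ) = 4F(z/4; 2θ).) -/
open MeasureTheory Real

inductive BinTree : Type
  | leaf : BinTree
  | node : BinTree → BinTree → BinTree

def BinTree.leaves : BinTree → ℕ
  | .leaf => 1
  | .node l r => l.leaves + r.leaves

noncomputable def mAngle : BinTree → ℝ → ℝ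
  | .leaf, _ => 1
  | .node l r, θ =>
      ∫ α in (0:ℝ)..Real.pi, ∫ β in (0:ℝ)..Real.pi,
        if θ < α + β ∧ α + β < Real.pi then mAngle l α * mAngle r β else 0

noncomputable def G (n : ℕ) (θ : ℝ) : ℝ :=
  ∑' τ : {τ : BinTree // τ.leaves = n}, mAngle τ.1 θ

/-- The analog of `mAngle` where all angles are constrained to `(0, π/2)`. -/
noncomputable def mAngle' : BinTree → ℝ → ℝ
  | .leaf, _ => 1
  | .node l r, θ =>
      ∫ α in (0:ℝ)..(Real.pi / 2), ∫ β in (0:ℝ)..(Real.pi / 2),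
        if θ < α + β ∧ α + β < Real.pi / 2 then mAngle' l α * mAngle' r β else 0

noncomputable def G' (n : ℕ) (θ : ℝ) : ℝ :=
  ∑' τ : {τ : BinTree // τ.leaves = n}, mAngle' τ.1 θ

theorem intervalIntegral.integral_comp_two_mul (f : ℝ → ℝ) (a : ℝ) :
    ∫ x in (0:ℝ)..a / 2, f (2 * x) = 2⁻¹ * ∫ x in (0:ℝ)..a, f x := by
  rw [intervalIntegral.integral_comp_mul_left f two_ne_zero, mul_zero,
    mul_div_cancel₀ a two_ne_zero, smul_eq_mul]

theorem intervalIntegral.integral_integral_comp_two_mul (F : ℝ → ℝ → ℝ) (a : ℝ) :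
    ∫ x in (0:ℝ)..a / 2, ∫ y in (0:ℝ)..a / 2, F (2 * x) (2 * y)
      = 4⁻¹ * ∫ u in (0:ℝ)..a, ∫ v in (0:ℝ)..a, F u v := by
  simp_rw [intervalIntegral.integral_comp_two_mul (F (2 * _)), intervalIntegral.integral_const_mul,
    intervalIntegral.integral_comp_two_mul (fun u ↦ ∫ v in (0:ℝ)..a, F u v)]
  ring

/-- Doubling every angle maps the constraints of `mAngle'` onto those of `mAngle`; each internal
node contributes a Jacobian `4⁻¹`, and a tree with `n` leaves has `n - 1` internal nodes. -/
theorem mAngle'_eq_zpow_mul_mAngle (τ : BinTree) (θ : ℝ) :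
    mAngle' τ θ = (4 : ℝ) ^ ((1 : ℤ) - τ.leaves) * mAngle τ (2 * θ) := by
  induction τ generalizing θ with
  | leaf => simp [mAngle', mAngle, BinTree.leaves]
  | node l r ihl ihr =>
    set c : ℝ := (4 : ℝ) ^ ((1 : ℤ) - l.leaves) * (4 : ℝ) ^ ((1 : ℤ) - r.leaves) with hc_def
    have hc : 4⁻¹ * c = (4 : ℝ) ^ ((1 : ℤ) - (l.node r).leaves) := by
      rw [hc_def, ← zpow_neg_one, ← zpow_add₀ four_ne_zero, ← zpow_add₀ four_ne_zero, BinTree.leaves]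
      congr 1
      push_cast
      ring
    have hcond (α β : ℝ) :
        (θ < α + β ∧ α + β < π / 2) ↔ (2 * θ < 2 * α + 2 * β ∧ 2 * α + 2 * β < π) := by
      constructor <;> rintro ⟨h1, h2⟩ <;> constructor <;> linarith
    calc mAngle' (l.node r) θ
        = ∫ α in (0:ℝ)..π / 2, ∫ β in (0:ℝ)..π / 2,
            (fun u v ↦ c * if 2 * θ < u + v ∧ u + v < π then mAngle l u * mAngle r v else 0)
              (2 * α) (2 * β) := by
          rw [mAngle']
          refine intervalIntegral.integral_congr fun α _ ↦ intervalIntegral.integral_congr fun β _ ↦ ?_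
          simp only [ihl, ihr, hcond, c]
          split_ifs <;> ring
      _ = 4⁻¹ * c * mAngle (l.node r) (2 * θ) := by
          refine (intervalIntegral.integral_integral_comp_two_mul
            (fun u v ↦ c * if 2 * θ < u + v ∧ u + v < π then mAngle l u * mAngle r v else 0) π).trans ?_
          simp only [intervalIntegral.integral_const_mul, mAngle, mul_assoc]
      _ = _ := by rw [hc]

theorem blob_one_red_leaf_enumeration_general (n : ℕ) (θ : ℝ) :
    G' n θ = (4 : ℝ) ^ ((1 : ℤ) - (n : ℤ)) * G n (2 * θ) := by
  rw [G', G, ← tsum_mul_left]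
  congr 1 with τ
  rw [mAngle'_eq_zpow_mul_mAngle, τ.2]

/-- Enumeration of blobs with one red leaf (Proposition 3.7, coefficient form of
`B^{red}(z;θ) = 4 F(z/4; 2θ)`): for every `n ≥ 1` and `θ ∈ [0, π/2]`,
`G'_n(θ) = 4^{1-n} G_n(2θ)`. -/
theorem blob_one_red_leaf_enumeration (n : ℕ) (hn : 1 ≤ n)
    (θ : ℝ) (hθ0 : 0 ≤ θ) (hθ : θ ≤ Real.pi / 2) :
    G' n θ = (4 : ℝ) ^ ((1 : ℤ) - (n : ℤ)) * G n (2 * θ) :=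
  blob_one_red_leaf_enumeration_general n θ
end

section
/- For every c ∈ ℝ, there is at most one continuous function F : [0,π] → ℝ satisfying F(θ) = c − ∫₀^θ (∫₀^s F(α)·F(s−α) dα) ds for all θ ∈ [0,π]. (Uniqueness of solutions of the integral equation (eq:Frecurrencederiv) of the paper.) -/
open MeasureTheory Real

/-- Uniqueness of continuous solutions of the Volterra-type integral equation
`F(θ) = c - ∫₀^θ ∫₀^s F(α) F(s-α) dα ds` on `[0,π]` (eq:Frecurrencederiv). -/
theorem volterra_uniqueness (c : ℝ) (F G : ℝ → ℝ)
    (hF : ContinuousOn F (Set.Icc 0 Real.pi))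
    (hG : ContinuousOn G (Set.Icc 0 Real.pi))
    (hFeq : ∀ θ ∈ Set.Icc (0 : ℝ) Real.pi,
      F θ = c - ∫ s in (0:ℝ)..θ, ∫ α in (0:ℝ)..s, F α * F (s - α))
    (hGeq : ∀ θ ∈ Set.Icc (0 : ℝ) Real.pi,
      G θ = c - ∫ s in (0:ℝ)..θ, ∫ α in (0:ℝ)..s, G α * G (s - α)) :
    ∀ θ ∈ Set.Icc (0 : ℝ) Real.pi, F θ = G θ := by
  -- clamp to [0, π]
  set cl : ℝ → ℝ := fun x => max 0 (min x Real.pi) with hcl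
  have hclmem : ∀ x, cl x ∈ Set.Icc (0:ℝ) Real.pi := fun x =>
    ⟨le_max_left _ _, max_le Real.pi_nonneg (min_le_right _ _)⟩
  have hclcont : Continuous cl :=
    continuous_const.max (continuous_id.min continuous_const)
  have hcleq : ∀ x ∈ Set.Icc (0:ℝ) Real.pi, cl x = x := by
    intro x hx
    simp only [hcl, min_eq_left hx.2, max_eq_right hx.1]
  set F' : ℝ → ℝ := fun x => F (cl x) with hF'def
  set G' : ℝ → ℝ := fun x => G (cl x) with hG'def
  have hF'c : Continuous F' := hF.comp_continuous hclcont hclmem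
  have hG'c : Continuous G' := hG.comp_continuous hclcont hclmem
  have hF'eqF : ∀ x ∈ Set.Icc (0:ℝ) Real.pi, F' x = F x := by
    intro x hx; simp only [hF'def, hcleq x hx]
  have hG'eqG : ∀ x ∈ Set.Icc (0:ℝ) Real.pi, G' x = G x := by
    intro x hx; simp only [hG'def, hcleq x hx]
  -- transfer the integral equations to the extended functions
  have transfer : ∀ (A A' : ℝ → ℝ),
      (∀ x ∈ Set.Icc (0:ℝ) Real.pi, A' x = A x) →
      (∀ θ ∈ Set.Icc (0 : ℝ) Real.pi,
        A θ = c - ∫ s in (0:ℝ)..θ, ∫ α in (0:ℝ)..s, A α * A (s - α)) →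
      ∀ θ ∈ Set.Icc (0 : ℝ) Real.pi,
        A' θ = c - ∫ s in (0:ℝ)..θ, ∫ α in (0:ℝ)..s, A' α * A' (s - α) := by
    intro A A' hAA' hA θ hθ
    rw [hAA' θ hθ, hA θ hθ]
    congr 1
    apply intervalIntegral.integral_congr
    intro s hs
    rw [Set.uIcc_of_le hθ.1] at hs
    apply intervalIntegral.integral_congr
    intro α hα
    rw [Set.uIcc_of_le hs.1] at hα
    show A α * A (s - α) = A' α * A' (s - α)
    have hsπ : s ≤ Real.pi := hs.2.trans hθ.2
    have hαI : α ∈ Set.Icc (0:ℝ) Real.pi := ⟨hα.1, hα.2.trans hsπ⟩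
    have hsαI : s - α ∈ Set.Icc (0:ℝ) Real.pi :=
      ⟨sub_nonneg.2 hα.2, (sub_le_self s hα.1).trans hsπ⟩
    rw [hAA' α hαI, hAA' _ hsαI]
  have hF'eq := transfer F F' hF'eqF hFeq
  have hG'eq := transfer G G' hG'eqG hGeq
  -- uniform bound M
  obtain ⟨M₁, hM₁⟩ := isCompact_Icc.exists_bound_of_continuousOn hF
  obtain ⟨M₂, hM₂⟩ := isCompact_Icc.exists_bound_of_continuousOn hG
  set M : ℝ := max M₁ M₂ with hMdef
  have hMF : ∀ x, |F' x| ≤ M := fun x => by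
    have := hM₁ _ (hclmem x)
    rw [Real.norm_eq_abs] at this
    exact this.trans (le_max_left _ _)
  have hMG : ∀ x, |G' x| ≤ M := fun x => by
    have := hM₂ _ (hclmem x)
    rw [Real.norm_eq_abs] at this
    exact this.trans (le_max_right _ _)
  have hM0 : 0 ≤ M := (abs_nonneg _).trans (hMF 0)
  -- the difference and its primitive
  set H : ℝ → ℝ := fun x => F' x - G' x with hHdef
  have hHc : Continuous H := hF'c.sub hG'c
  set g : ℝ → ℝ := fun θ => ∫ s in (0:ℝ)..θ, |H s| with hgdef
  set K : ℝ := 2 * M * Real.pi with hKdef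
  have hK0 : 0 ≤ K := by positivity
  have hgnonneg : ∀ x, 0 ≤ x → 0 ≤ g x := fun x hx =>
    intervalIntegral.integral_nonneg hx (fun t _ => abs_nonneg _)
  -- continuity of the inner convolution integrals
  have hf1c : Continuous fun s => ∫ α in (0:ℝ)..s, F' α * F' (s - α) := by
    apply intervalIntegral.continuous_parametric_intervalIntegral_of_continuous
      (f := fun s α => F' α * F' (s - α)) (by fun_prop) continuous_id
  have hg1c : Continuous fun s => ∫ α in (0:ℝ)..s, G' α * G' (s - α) := by
    apply intervalIntegral.continuous_parametric_intervalIntegral_of_continuous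
      (f := fun s α => G' α * G' (s - α)) (by fun_prop) continuous_id
  -- key estimate (★)
  have star : ∀ θ ∈ Set.Icc (0:ℝ) Real.pi, |H θ| ≤ K * g θ := by
    intro θ hθ
    have hHθ : H θ = ∫ s in (0:ℝ)..θ,
        ((∫ α in (0:ℝ)..s, G' α * G' (s - α)) - ∫ α in (0:ℝ)..s, F' α * F' (s - α)) := by
      rw [intervalIntegral.integral_sub (hg1c.intervalIntegrable _ _)
        (hf1c.intervalIntegrable _ _)]
      show F' θ - G' θ = _
      rw [hF'eq θ hθ, hG'eq θ hθ]
      ring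
    -- bound the integrand pointwise on [0, θ]
    have inner_bound : ∀ s ∈ Set.Icc (0:ℝ) θ,
        |(∫ α in (0:ℝ)..s, G' α * G' (s - α)) - ∫ α in (0:ℝ)..s, F' α * F' (s - α)|
          ≤ 2 * M * g θ := by
      intro s hs
      have hsub : (∫ α in (0:ℝ)..s, G' α * G' (s - α)) - ∫ α in (0:ℝ)..s, F' α * F' (s - α)
          = ∫ α in (0:ℝ)..s, (G' α * G' (s - α) - F' α * F' (s - α)) := by
        rw [intervalIntegral.integral_sub
          ((Continuous.intervalIntegrable (by fun_prop) _ _ :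
            IntervalIntegrable (fun α => G' α * G' (s - α)) volume 0 s))
          ((Continuous.intervalIntegrable (by fun_prop) _ _ :
            IntervalIntegrable (fun α => F' α * F' (s - α)) volume 0 s))]
      rw [hsub]
      have h1 : |∫ α in (0:ℝ)..s, (G' α * G' (s - α) - F' α * F' (s - α))|
          ≤ ∫ α in (0:ℝ)..s, |G' α * G' (s - α) - F' α * F' (s - α)| :=
        intervalIntegral.abs_integral_le_integral_abs hs.1
      have h2 : (∫ α in (0:ℝ)..s, |G' α * G' (s - α) - F' α * F' (s - α)|)
          ≤ ∫ α in (0:ℝ)..s, (M * |H (s - α)| + M * |H α|) := by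
        apply intervalIntegral.integral_mono_on hs.1
        · exact Continuous.intervalIntegrable (by fun_prop) _ _
        · exact Continuous.intervalIntegrable (by fun_prop) _ _
        · intro α _
          have key : G' α * G' (s - α) - F' α * F' (s - α)
              = G' α * (-(H (s - α))) + (-(H α)) * F' (s - α) := by
            simp only [hHdef]; ring
          rw [key]
          calc |G' α * (-(H (s - α))) + (-(H α)) * F' (s - α)|
              ≤ |G' α * (-(H (s - α)))| + |(-(H α)) * F' (s - α)| := abs_add_le _ _
            _ = |G' α| * |H (s - α)| + |H α| * |F' (s - α)| := by
                rw [abs_mul, abs_mul, abs_neg, abs_neg]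
            _ ≤ M * |H (s - α)| + M * |H α| := by
                refine add_le_add (mul_le_mul_of_nonneg_right (hMG α) (abs_nonneg _)) ?_
                rw [mul_comm M]
                exact mul_le_mul_of_nonneg_left (hMF _) (abs_nonneg _)
      have h3 : (∫ α in (0:ℝ)..s, (M * |H (s - α)| + M * |H α|)) = 2 * M * g s := by
        rw [intervalIntegral.integral_add
          ((Continuous.intervalIntegrable (by fun_prop) _ _ :
            IntervalIntegrable (fun α => M * |H (s - α)|) volume 0 s))
          ((Continuous.intervalIntegrable (by fun_prop) _ _ :
            IntervalIntegrable (fun α => M * |H α|) volume 0 s)),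
          intervalIntegral.integral_const_mul, intervalIntegral.integral_const_mul]
        have hrefl : (∫ α in (0:ℝ)..s, |H (s - α)|) = ∫ α in (0:ℝ)..s, |H α| := by
          have := intervalIntegral.integral_comp_sub_left (fun t => |H t|) s (a := 0) (b := s)
          simpa using this
        rw [hrefl]
        simp only [hgdef]
        ring
      have h4 : g s ≤ g θ := by
        apply intervalIntegral.integral_mono_interval le_rfl hs.1 hs.2
        · filter_upwards with t using abs_nonneg _
        · exact hHc.abs.intervalIntegrable _ _
      calc |∫ α in (0:ℝ)..s, (G' α * G' (s - α) - F' α * F' (s - α))|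
          ≤ ∫ α in (0:ℝ)..s, (M * |H (s - α)| + M * |H α|) := h1.trans h2
        _ = 2 * M * g s := h3
        _ ≤ 2 * M * g θ := by gcongr
    -- integrate the bound
    have h5 : |H θ| ≤ ∫ s in (0:ℝ)..θ,
        |(∫ α in (0:ℝ)..s, G' α * G' (s - α)) - ∫ α in (0:ℝ)..s, F' α * F' (s - α)| := by
      rw [hHθ]
      exact intervalIntegral.abs_integral_le_integral_abs hθ.1
    have h6 : (∫ s in (0:ℝ)..θ,
        |(∫ α in (0:ℝ)..s, G' α * G' (s - α)) - ∫ α in (0:ℝ)..s, F' α * F' (s - α)|)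
          ≤ ∫ _ in (0:ℝ)..θ, (2 * M * g θ) := by
      apply intervalIntegral.integral_mono_on hθ.1
      · exact ((hg1c.sub hf1c).abs).intervalIntegrable _ _
      · exact intervalIntegrable_const
      · exact inner_bound
    have h7 : (∫ _ in (0:ℝ)..θ, (2 * M * g θ)) = θ * (2 * M * g θ) := by
      simp [intervalIntegral.integral_const]
      ring
    calc |H θ| ≤ θ * (2 * M * g θ) := by
          rw [← h7]; exact h5.trans h6
      _ ≤ Real.pi * (2 * M * g θ) := by
          have hg := hgnonneg θ hθ.1
          have h2 : (0:ℝ) ≤ 2 * M * g θ := by positivity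
          exact mul_le_mul_of_nonneg_right hθ.2 h2
      _ = K * g θ := by rw [hKdef]; ring
  -- Grönwall: g ≡ 0 on [0, π]
  have hgderiv : ∀ b : ℝ, HasDerivAt g (|H b|) b := fun b =>
    (hHc.abs.integral_hasStrictDerivAt 0 b).hasDerivAt
  have hgc : Continuous g := by
    rw [continuous_iff_continuousAt]
    exact fun x => (hgderiv x).continuousAt
  have hg0 : ∀ x ∈ Set.Icc (0:ℝ) Real.pi, g x = 0 := by
    have main := norm_le_gronwallBound_of_norm_deriv_right_le
      (f := g) (f' := fun x => |H x|) (δ := 0) (K := K) (ε := 0) (a := 0) (b := Real.pi)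
      hgc.continuousOn
      (fun x _ => (hgderiv x).hasDerivWithinAt)
      (by simp [hgdef])
      (by
        intro x hx
        rw [Real.norm_eq_abs, abs_abs, Real.norm_eq_abs,
          abs_of_nonneg (hgnonneg x hx.1), add_zero]
        exact star x ⟨hx.1, hx.2.le⟩)
    intro x hx
    have := main x hx
    rw [Real.norm_eq_abs] at this
    have hb : gronwallBound 0 K 0 (x - 0) = 0 := by
      simp [gronwallBound]
    rw [hb] at this
    exact abs_eq_zero.mp (le_antisymm this (abs_nonneg _))
  -- conclude
  intro θ hθ
  have hHθ0 : H θ = 0 := by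
    have h := star θ hθ
    rw [hg0 θ hθ, mul_zero] at h
    exact abs_eq_zero.mp (le_antisymm h (abs_nonneg _))
  have : F' θ = G' θ := sub_eq_zero.mp hHθ0
  rwa [hF'eqF θ hθ, hG'eqG θ hθ] at this
end
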